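/- Let X = X_1,...,X_n and Y = Y_1,...,Y_n be two splits of a cycle into nonempty arcs, enumerated clockwise from a common anchor. Let Z = Z_1,...,Z_n be an XY-useful sequence: for every i (indices mod n), at least one of the following holds: (1) Z_i = X_i and Z_{i+1} = X_{i+1}; (2) Z_i = Y_i and Z_{i+1} = Y_{i+1}; (3) Z_i = X_i and X_i is a jump to Y; (4) Z_i = Y_i and Y_i is a jump to X. Then the sets Z_1,...,Z_n are pairwise disjoint. -/
import Mathlib


open scoped BigOperators

noncomputable section

/-- Total value of a bundle under an additive utility. -/
def bval {V : Type*} [DecidableEq V] (u : V → ℝ) (S : Finset V) : ℝ := ∑ v ∈ S, u v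

/-- A `G`-bundle: a (possibly empty) set of vertices inducing a connected subgraph. -/
def IsBundle {V : Type*} (G : SimpleGraph V) (S : Finset V) : Prop :=
  (S : Set V) = ∅ ∨ (G.induce (S : Set V)).Connected

/-- A split of the vertex set `A` into `n` pairwise disjoint `G`-bundles covering `A`. -/
def IsSplitOn {V : Type*} [DecidableEq V] (G : SimpleGraph V) (A : Finset V) (n : ℕ)
    (P : Fin n → Finset V) : Prop :=
  (∀ i, IsBundle G (P i)) ∧ (∀ i j, i ≠ j → Disjoint (P i) (P j)) ∧
  (∀ i, P i ⊆ A) ∧ (∀ v ∈ A, ∃ i, v ∈ P i)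

/-- The maximin share over splits of `A` into `n` `G`-bundles. -/
def mmsOn {V : Type*} [DecidableEq V] (G : SimpleGraph V) (A : Finset V)
    (n : ℕ) (u : V → ℝ) : ℝ :=
  sSup {q : ℝ | ∃ P : Fin n → Finset V, IsSplitOn G A n P ∧ ∀ i, q ≤ bval u (P i)}

/-- The maximin share `mms^(n)(G,u)`. -/
def mms {V : Type*} [DecidableEq V] [Fintype V] (G : SimpleGraph V)
    (n : ℕ) (u : V → ℝ) : ℝ := mmsOn G Finset.univ n u

/-- The cycle on `m` vertices, identified with `ZMod m`. -/
def cycleGraph (m : ℕ) : SimpleGraph (ZMod m) :=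
  SimpleGraph.fromRel (fun v w => w = v + 1)

end

/-- The clockwise prefix of length `j` of the cycle `ZMod m`, starting at the anchor
`a`: the vertices `a, a+1, …, a+(j-1)`. -/
noncomputable def Pref (m : ℕ) (a : ZMod m) (j : ℕ) : Finset (ZMod m) :=
  (Finset.range j).image (fun k : ℕ => a + (k : ZMod m))

lemma Pref_mono (m : ℕ) (a : ZMod m) {j j' : ℕ} (h : j ≤ j') :
    Pref m a j ⊆ Pref m a j' :=
  Finset.image_subset_image (Finset.range_subset_range.mpr h)

lemma mem_Pref (m : ℕ) [NeZero m] (a : ZMod m) {j : ℕ} (hj : j ≤ m) (v : ZMod m) :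
    v ∈ Pref m a j ↔ (v - a).val < j := by
  simp only [Pref, Finset.mem_image, Finset.mem_range]
  constructor
  · rintro ⟨k, hk, rfl⟩
    rw [add_sub_cancel_left, ZMod.val_natCast, Nat.mod_eq_of_lt (lt_of_lt_of_le hk hj)]
    exact hk
  · intro h
    refine ⟨(v - a).val, h, ?_⟩
    rw [ZMod.natCast_val, ZMod.cast_id]
    ring

lemma arc_sub (m : ℕ) [NeZero m] (a : ZMod m) {c1 c2 d1 d2 : ℕ}
    (h2 : c2 ≤ m) (h3 : d1 ≤ m) (h4 : d2 ≤ m)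
    (h : Pref m a c2 \ Pref m a c1 ⊆ Pref m a d2 \ Pref m a d1) :
    ∀ t : ℕ, c1 ≤ t → t < c2 → d1 ≤ t ∧ t < d2 := by
  intro t ht1 ht2
  have htm : t < m := lt_of_lt_of_le ht2 h2
  have hc1 : c1 ≤ m := le_trans (le_of_lt (lt_of_le_of_lt ht1 ht2)) h2
  have hv : (a + (t : ZMod m)) ∈ Pref m a c2 \ Pref m a c1 := by
    rw [Finset.mem_sdiff, mem_Pref m a h2, mem_Pref m a hc1,
      add_sub_cancel_left, ZMod.val_natCast, Nat.mod_eq_of_lt htm]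
    exact ⟨ht2, not_lt.mpr ht1⟩
  have hv2 := h hv
  rw [Finset.mem_sdiff, mem_Pref m a h4, mem_Pref m a h3,
    add_sub_cancel_left, ZMod.val_natCast, Nat.mod_eq_of_lt htm] at hv2
  exact ⟨not_lt.mp hv2.2, hv2.1⟩

lemma arc_eq (m : ℕ) [NeZero m] (a : ZMod m) {c1 c2 d1 d2 : ℕ}
    (h1 : c1 < c2) (h2 : c2 ≤ m) (h3 : d1 < d2) (h4 : d2 ≤ m)
    (h : Pref m a c2 \ Pref m a c1 = Pref m a d2 \ Pref m a d1) :
    c1 = d1 ∧ c2 = d2 := by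
  have k1 := arc_sub m a h2 (le_trans (le_of_lt h3) h4) h4 (le_of_eq h)
  have k2 := arc_sub m a h4 (le_trans (le_of_lt h1) h2) h2 (le_of_eq h.symm)
  have a1 := k1 c1 le_rfl h1
  have a2 := k2 d1 le_rfl h3
  have a3 := k1 (c2 - 1) (by omega) (by omega)
  have a4 := k2 (d2 - 1) (by omega) (by omega)
  omega


/-- the sets of an `XY`-useful sequence are pairwise disjoint.
Here the successor of index `i` (for `1 ≤ i ≤ n`) is `i % n + 1`, wrapping `n` to `1`. -/
theorem stmt17 (m n : ℕ) [NeZero m] (hm : 3 ≤ m) (a : ZMod m)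
    (c d : ℕ → ℕ)
    (hc0 : c 0 = 0) (hcn : c n = m) (hcmono : ∀ j < n, c j < c (j + 1))
    (hd0 : d 0 = 0) (hdn : d n = m) (hdmono : ∀ j < n, d j < d (j + 1))
    (X Y : ℕ → Finset (ZMod m))
    (hX : ∀ j, 1 ≤ j → j ≤ n → X j = Pref m a (c j) \ Pref m a (c (j - 1)))
    (hY : ∀ j, 1 ≤ j → j ≤ n → Y j = Pref m a (d j) \ Pref m a (d (j - 1)))
    (Z : ℕ → Finset (ZMod m))
    (hZ : ∀ i, 1 ≤ i → i ≤ n →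
      (Z i = X i ∧ Z (i % n + 1) = X (i % n + 1)) ∨
      (Z i = Y i ∧ Z (i % n + 1) = Y (i % n + 1)) ∨
      (Z i = X i ∧ Pref m a (c i) ⊆ Pref m a (d i)) ∨
      (Z i = Y i ∧ Pref m a (d i) ⊆ Pref m a (c i))) :
    ∀ i j, 1 ≤ i → i < j → j ≤ n → Disjoint (Z i) (Z j) := by
  intro i j hi hij hj
  -- monotonicity of the cut sequences
  have cmono : ∀ l ≤ n, ∀ k ≤ l, c k ≤ c l := by
    intro l hl
    induction l with
    | zero =>
      intro k hk
      have hk0 : k = 0 := Nat.le_zero.mp hk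
      rw [hk0]
    | succ l ih =>
      intro k hk
      rcases Nat.lt_or_ge k (l + 1) with h | h
      · exact le_trans (ih (by omega) k (by omega)) (le_of_lt (hcmono l (by omega)))
      · have h' : k = l + 1 := by omega
        rw [h']
  have dmono : ∀ l ≤ n, ∀ k ≤ l, d k ≤ d l := by
    intro l hl
    induction l with
    | zero =>
      intro k hk
      have hk0 : k = 0 := Nat.le_zero.mp hk
      rw [hk0]
    | succ l ih =>
      intro k hk
      rcases Nat.lt_or_ge k (l + 1) with h | h
      · exact le_trans (ih (by omega) k (by omega)) (le_of_lt (hdmono l (by omega)))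
      · have h' : k = l + 1 := by omega
        rw [h']
  have cle : ∀ k ≤ n, c k ≤ m := fun k hk => hcn ▸ cmono n le_rfl k hk
  have dle : ∀ k ≤ n, d k ≤ m := fun k hk => hdn ▸ dmono n le_rfl k hk
  -- equal arcs force equal cut points
  have eqXY : ∀ k, 1 ≤ k → k ≤ n → X k = Y k → c (k - 1) = d (k - 1) ∧ c k = d k := by
    intro k h1 h2 hXY
    have hc : c (k - 1) < c k := by
      have := hcmono (k - 1) (by omega); rwa [Nat.sub_add_cancel h1] at this
    have hd : d (k - 1) < d k := by
      have := hdmono (k - 1) (by omega); rwa [Nat.sub_add_cancel h1] at this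
    refine arc_eq m a hc (cle k h2) hd (dle k h2) ?_
    rw [← hX k h1 h2, ← hY k h1 h2, hXY]
  -- the invariant
  have U : ∀ k, i + 1 ≤ k → k ≤ j →
      (Z i ⊆ Pref m a (c (k - 1)) ∧ Z k = X k) ∨
      (Z i ⊆ Pref m a (d (k - 1)) ∧ Z k = Y k) ∨
      (Z i ⊆ Pref m a (c (k - 1)) ∧ Z i ⊆ Pref m a (d (k - 1))) := by
    intro k hk
    induction k, hk using Nat.le_induction with
    | base =>
      intro _
      have hin : i % n = i := Nat.mod_eq_of_lt (by omega)
      have hxi := hX i hi (by omega)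
      have hyi := hY i hi (by omega)
      rcases hZ i hi (by omega) with ⟨h1, h2⟩ | ⟨h1, h2⟩ | ⟨h1, h2⟩ | ⟨h1, h2⟩
      · rw [hin] at h2
        exact Or.inl ⟨by rw [h1, hxi]; exact Finset.sdiff_subset, h2⟩
      · rw [hin] at h2
        exact Or.inr (Or.inl ⟨by rw [h1, hyi]; exact Finset.sdiff_subset, h2⟩)
      · refine Or.inr (Or.inr ⟨?_, ?_⟩)
        · rw [h1, hxi]; exact Finset.sdiff_subset
        · rw [h1, hxi]; exact le_trans Finset.sdiff_subset h2
      · refine Or.inr (Or.inr ⟨?_, ?_⟩)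
        · rw [h1, hyi]; exact le_trans Finset.sdiff_subset h2
        · rw [h1, hyi]; exact Finset.sdiff_subset
    | succ k hk ih =>
      intro hk1j
      simp only [Nat.add_sub_cancel]
      have hUk := ih (by omega)
      have hk1 : 1 ≤ k := by omega
      have hkn : k < n := by omega
      have hkm : k % n = k := Nat.mod_eq_of_lt hkn
      have hzk := hZ k hk1 (le_of_lt hkn)
      rw [hkm] at hzk
      have hcc : Pref m a (c (k - 1)) ⊆ Pref m a (c k) :=
        Pref_mono m a (cmono k (by omega) (k - 1) (by omega))
      have hdd : Pref m a (d (k - 1)) ⊆ Pref m a (d k) :=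
        Pref_mono m a (dmono k (by omega) (k - 1) (by omega))
      rcases hUk with ⟨hs, hzx⟩ | ⟨hs, hzy⟩ | ⟨hs1, hs2⟩
      · rcases hzk with ⟨h1, h2⟩ | ⟨h1, h2⟩ | ⟨h1, h2⟩ | ⟨h1, h2⟩
        · exact Or.inl ⟨le_trans hs hcc, h2⟩
        · have hxy : X k = Y k := by rw [← hzx, h1]
          have he := (eqXY k hk1 (by omega) hxy).2
          exact Or.inr (Or.inl ⟨by rw [← he]; exact le_trans hs hcc, h2⟩)
        · exact Or.inr (Or.inr ⟨le_trans hs hcc, le_trans (le_trans hs hcc) h2⟩)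
        · have hxy : X k = Y k := by rw [← hzx, h1]
          have he := (eqXY k hk1 (by omega) hxy).2
          exact Or.inr (Or.inr ⟨le_trans hs hcc,
            by rw [← he]; exact le_trans hs hcc⟩)
      · rcases hzk with ⟨h1, h2⟩ | ⟨h1, h2⟩ | ⟨h1, h2⟩ | ⟨h1, h2⟩
        · have hxy : X k = Y k := by rw [← hzy, h1]
          have he := (eqXY k hk1 (by omega) hxy).2
          exact Or.inl ⟨by rw [he]; exact le_trans hs hdd, h2⟩
        · exact Or.inr (Or.inl ⟨le_trans hs hdd, h2⟩)
        · have hxy : X k = Y k := by rw [← hzy, h1]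
          have he := (eqXY k hk1 (by omega) hxy).2
          exact Or.inr (Or.inr ⟨by rw [he]; exact le_trans hs hdd,
            le_trans hs hdd⟩)
        · exact Or.inr (Or.inr ⟨le_trans (le_trans hs hdd) h2, le_trans hs hdd⟩)
      · exact Or.inr (Or.inr ⟨le_trans hs1 hcc, le_trans hs2 hdd⟩)
  -- conclude
  have hUj := U j (by omega) le_rfl
  have hxj := hX j (by omega) hj
  have hyj := hY j (by omega) hj
  have dX : Z i ⊆ Pref m a (c (j - 1)) → Z j = X j → Disjoint (Z i) (Z j) := by
    intro hs hzx
    rw [hzx, hxj]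
    exact Finset.disjoint_sdiff.mono_left hs
  have dY : Z i ⊆ Pref m a (d (j - 1)) → Z j = Y j → Disjoint (Z i) (Z j) := by
    intro hs hzy
    rw [hzy, hyj]
    exact Finset.disjoint_sdiff.mono_left hs
  rcases hUj with ⟨hs, hzx⟩ | ⟨hs, hzy⟩ | ⟨hs1, hs2⟩
  · exact dX hs hzx
  · exact dY hs hzy
  · rcases hZ j (by omega) hj with ⟨h1, _⟩ | ⟨h1, _⟩ | ⟨h1, _⟩ | ⟨h1, _⟩
    · exact dX hs1 h1
    · exact dY hs2 h1
    · exact dX hs1 h1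
    · exact dY hs2 h1
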